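/- Let P be a longest Berge path in an r-graph H, with edges e_1,...,e_t and key vertices v_0,v_1,...,v_t (so t = ℓ(H)). Then for each a ∈ {0,t}, d_H(v_a) ≤ C(|K_a(P)|, r−1) + |E^I_a(P)|; moreover equality holds if and only if N_H(v_a) is equal to the union of the family of all (r−1)-element subsets of K_a(P) and the family {e \ {v_a} : e ∈ E^I_a(P)}, and these two families are disjoint. -/

import Mathlib

namespace Berge

variable {V : Type*} [DecidableEq V] [Fintype V]

/-- `E` is the edge set of an `r`-uniform hypergraph (`r`-graph) on `V`. -/
def IsRGraph (r : ℕ) (E : Finset (Finset V)) : Prop :=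
  ∀ e ∈ E, e.card = r

/-- The degree of a vertex: the number of edges containing it. -/
def deg (E : Finset (Finset V)) (x : V) : ℕ :=
  (E.filter fun e => x ∈ e).card

/-- The minimum degree `δ₁`. -/
noncomputable def minDeg (E : Finset (Finset V)) : ℕ :=
  sInf {d | ∃ x : V, deg E x = d}

/-- A Berge path of length `t`: distinct vertices `v 0, ..., v t` and distinct edges
`f 0, ..., f (t-1)` (here `f i` plays the role of the edge `e_{i+1}` of the paper),
with `{v i, v (i+1)} ⊆ f i`. -/
def IsBergePath (E : Finset (Finset V)) (t : ℕ)
    (v : Fin (t + 1) → V) (f : Fin t → Finset V) : Prop :=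
  Function.Injective v ∧ Function.Injective f ∧ (∀ i, f i ∈ E) ∧
    ∀ i : Fin t, v i.castSucc ∈ f i ∧ v i.succ ∈ f i

/-- `H` is connected: any two vertices are connected by a Berge path. -/
def Connected (E : Finset (Finset V)) : Prop :=
  ∀ u w : V, ∃ (t : ℕ) (v : Fin (t + 1) → V) (f : Fin t → Finset V),
    IsBergePath E t v f ∧ v 0 = u ∧ v (Fin.last t) = w

/-- `ℓ(H)`: the length of a longest Berge path. -/
noncomputable def pathLen (E : Finset (Finset V)) : ℕ :=
  sSup {t | ∃ (v : Fin (t + 1) → V) (f : Fin t → Finset V), IsBergePath E t v f}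

/-- A Berge cycle of length `t`: distinct vertices `v 0, ..., v (t-1)` and distinct
edges `f 0, ..., f (t-1)` with `{v (i-1), v i} ⊆ f i` (indices mod `t`), equivalently
`v i ∈ f i` and `v i ∈ f (i+1)` for all `i`. -/
def IsBergeCycle (E : Finset (Finset V)) (t : ℕ)
    (v : Fin t → V) (f : Fin t → Finset V) : Prop :=
  Function.Injective v ∧ Function.Injective f ∧ (∀ i, f i ∈ E) ∧
    ∀ i : Fin t, v i ∈ f i ∧ v i ∈ f ⟨((i : ℕ) + 1) % t, Nat.mod_lt _ i.pos⟩

/-- `c(H)`: the length of a longest Berge cycle. -/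
noncomputable def cycLen (E : Finset (Finset V)) : ℕ :=
  sSup {t | ∃ (v : Fin t → V) (f : Fin t → Finset V), IsBergeCycle E t v f}

/-- `E^O(P, w)`: the edges of `H` outside `P` that contain `w`. -/
def EO (E : Finset (Finset V)) {t : ℕ} (f : Fin t → Finset V) (w : V) :
    Set (Finset V) :=
  {e | e ∈ E ∧ e ∉ Set.range f ∧ w ∈ e}

/-- `K(P, w)`: the key vertices of `P` other than `w` that lie on some edge of
`E^O(P, w)`.  For `w = v a` with `a ∈ {0, t}` this is `K_a(P)`; for `w ∉ K(P)` this
is `K_w(P)`. -/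
def KsetP (E : Finset (Finset V)) {t : ℕ} (v : Fin (t + 1) → V)
    (f : Fin t → Finset V) (w : V) : Set V :=
  {x | (∃ i, v i = x) ∧ x ≠ w ∧ ∃ e ∈ EO E f w, x ∈ e}

/-- `κ(P, w)`: the set of indices of the vertices in `K(P, w)` (as integers). -/
def kappa (E : Finset (Finset V)) {t : ℕ} (v : Fin (t + 1) → V)
    (f : Fin t → Finset V) (w : V) : Set ℤ :=
  {i : ℤ | ∃ j : Fin (t + 1), ((j : ℕ) : ℤ) = i ∧ v j ∈ KsetP E v f w}

/-- `E^I(P, w)`: the edges of `P` that contain `w`. -/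
def EIset {t : ℕ} (f : Fin t → Finset V) (w : V) : Set (Finset V) :=
  {e | e ∈ Set.range f ∧ w ∈ e}

/-- `ε^i(P, w)`: the (1-based, as in the paper) indices of the edges of `P`
containing `w`, as integers; so `i ∈ ε^i(P, w)` iff `w ∈ e_i = f (i-1)`. -/
def epsi {t : ℕ} (f : Fin t → Finset V) (w : V) : Set ℤ :=
  {i : ℤ | ∃ j : Fin t, ((j : ℕ) : ℤ) + 1 = i ∧ w ∈ f j}

/-- `N_H(x) = {T : T ∪ {x} ∈ E(H)}` (with `x ∉ T`). -/
def NH (E : Finset (Finset V)) (x : V) : Set (Finset V) :=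
  {T | x ∉ T ∧ insert x T ∈ E}

/-- The edge set of `S_r(n, k)` on the vertex set `V` (`|V| = n`), where `A ⊆ V` is
the distinguished `k`-set: all `r`-sets `e` with `|e ∩ (V \ A)| ≤ 1`. -/
def Sr (r : ℕ) (A : Finset V) : Finset (Finset V) :=
  Finset.univ.filter fun e : Finset V => e.card = r ∧ (e \ A).card ≤ 1

/-- The edge set of `S'_r(n, k)`: all `r`-sets `e` with `|e ∩ (V \ A)| = 1`. -/
def Sr' (r : ℕ) (A : Finset V) : Finset (Finset V) :=
  Finset.univ.filter fun e : Finset V => e.card = r ∧ (e \ A).card = 1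

/-- The edge set of `S(sK^r_{k+1}, 1)` determined by the cliques `B 0, ..., B (s-1)`:
all `r`-subsets of some `B i`. -/
def SK (r : ℕ) {s : ℕ} (B : Fin s → Finset V) : Finset (Finset V) :=
  Finset.univ.filter fun e : Finset V => e.card = r ∧ ∃ i, e ⊆ B i

/-- `H` is isomorphic to `S(sK^r_{k+1}, 1)`: there are `s` cliques of size `k+1`
pairwise meeting exactly in a common center `c` and covering `V`, and the edges of
`H` are exactly the `r`-subsets of the cliques. -/
def IsStarOfCliques (r k s : ℕ) (E : Finset (Finset V)) : Prop :=
  ∃ (c : V) (B : Fin s → Finset V),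
    (∀ i, (B i).card = k + 1) ∧ (∀ i, c ∈ B i) ∧
    (∀ i j, i ≠ j → B i ∩ B j = {c}) ∧
    Finset.univ.biUnion B = Finset.univ ∧
    E = SK r B

end Berge

/-!
Since `P` is a longest path, an edge through the endpoint `v_a` that is not an edge of `P`
contains only key vertices: a vertex outside `P` would extend `P` by one edge. Hence every
`T ∈ N_H(v_a)` is an `(r-1)`-subset of `K_a(P)` or of the form `e \ {v_a}` with
`e ∈ E^I_a(P)`, while `e ↦ e \ {v_a}` maps the edges through `v_a` bijectively onto
`N_H(v_a)`. The bound and its equality case are then inclusion–exclusion for the inclusion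
of `N_H(v_a)` in the union of these two families.
-/

namespace Set

variable {α : Type*} {N A B : Set α}

theorem ncard_le_ncard_add_ncard_of_subset_union (h : N ⊆ A ∪ B)
    (hA : A.Finite := by toFinite_tac) (hB : B.Finite := by toFinite_tac) :
    N.ncard ≤ A.ncard + B.ncard :=
  (ncard_le_ncard h (hA.union hB)).trans (ncard_union_le A B)

theorem ncard_eq_ncard_add_ncard_iff_of_subset_union (h : N ⊆ A ∪ B)
    (hA : A.Finite := by toFinite_tac) (hB : B.Finite := by toFinite_tac) :
    N.ncard = A.ncard + B.ncard ↔ N = A ∪ B ∧ A ∩ B = ∅ := by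
  have hunion := ncard_union_add_ncard_inter A B hA hB
  have hN := ncard_le_ncard h (hA.union hB)
  constructor
  · intro hcard
    exact ⟨eq_of_subset_of_ncard_le h (by omega) (hA.union hB),
      (ncard_eq_zero (hA.inter_of_left B)).1 (by omega)⟩
  · rintro ⟨rfl, hAB⟩
    rw [hAB, ncard_empty] at hunion
    omega

theorem Finite.ncard_setOf_subset_card_eq_choose {S : Set α} (hS : S.Finite) (k : ℕ) :
    {T : Finset α | (↑T : Set α) ⊆ S ∧ T.card = k}.ncard = S.ncard.choose k := by
  have hsets : {T : Finset α | (↑T : Set α) ⊆ S ∧ T.card = k}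
      = ↑(hS.toFinset.powersetCard k) := by
    ext T
    simp [Finset.subset_iff, Set.subset_def]
  rw [hsets, ncard_coe_finset, Finset.card_powersetCard, ncard_eq_toFinset_card S hS]

end Set

namespace Berge

variable {V : Type*}

theorem NH_eq_image_erase [DecidableEq V] (E : Finset (Finset V)) (x : V) :
    NH E x = ↑((E.filter fun e => x ∈ e).image fun e => e.erase x) := by
  ext T
  simp only [NH, Finset.coe_image, Finset.coe_filter, Set.mem_image, Set.mem_ofPred_eq]
  constructor
  · rintro ⟨hxT, hT⟩
    exact ⟨insert x T, ⟨hT, T.mem_insert_self x⟩, Finset.erase_insert hxT⟩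
  · rintro ⟨e, ⟨he, hxe⟩, rfl⟩
    exact ⟨e.notMem_erase x, by rwa [Finset.insert_erase hxe]⟩

theorem ncard_NH [DecidableEq V] (E : Finset (Finset V)) (x : V) :
    (NH E x).ncard = deg E x := by
  rw [NH_eq_image_erase, Set.ncard_coe_finset, deg]
  exact Finset.card_image_of_injOn
    ((Finset.erase_injOn' x).mono fun e he => (Finset.mem_filter.1 he).2)

section LongestPath

variable {E : Finset (Finset V)} {t : ℕ} {v : Fin (t + 1) → V} {f : Fin t → Finset V}

theorem IsBergePath.cons (hP : IsBergePath E t v f) {x : V} {e : Finset V}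
    (hx : x ∉ Set.range v) (he : e ∈ E) (hef : e ∉ Set.range f) (hxe : x ∈ e)
    (hve : v 0 ∈ e) :
    IsBergePath E (t + 1) (Fin.cons x v) (Fin.cons e f) := by
  obtain ⟨hv, hf, hfE, hvf⟩ := hP
  refine ⟨Fin.cons_injective_of_injective hx hv, Fin.cons_injective_of_injective hef hf,
    Fin.cases he hfE, Fin.cases ⟨hxe, hve⟩ fun i => ?_⟩
  simpa [← Fin.succ_castSucc] using hvf i

theorem IsBergePath.snoc (hP : IsBergePath E t v f) {x : V} {e : Finset V}
    (hx : x ∉ Set.range v) (he : e ∈ E) (hef : e ∉ Set.range f) (hxe : x ∈ e)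
    (hve : v (Fin.last t) ∈ e) :
    IsBergePath E (t + 1) (Fin.snoc v x) (Fin.snoc f e) := by
  obtain ⟨hv, hf, hfE, hvf⟩ := hP
  refine ⟨Fin.snoc_injective_of_injective hv hx, Fin.snoc_injective_of_injective hf hef,
    Fin.lastCases (by simpa using he) fun i => by simpa using hfE i,
    Fin.lastCases (by simpa using ⟨hve, hxe⟩) fun i => ?_⟩
  rw [Fin.snoc_castSucc, Fin.snoc_castSucc, Fin.succ_castSucc, Fin.snoc_castSucc]
  exact hvf i

theorem IsBergePath.le_pathLen [Fintype V] (hP : IsBergePath E t v f) : t ≤ pathLen E := by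
  refine le_csSup ⟨Fintype.card V, ?_⟩ ⟨v, f, hP⟩
  rintro s ⟨u, -, hu, -⟩
  have hcard := Fintype.card_le_of_injective u hu
  rw [Fintype.card_fin] at hcard
  omega

theorem IsBergePath.mem_range_of_mem_EO [Fintype V] (hP : IsBergePath E t v f)
    (hlong : pathLen E = t)
    {a : Fin (t + 1)} (ha : a = 0 ∨ a = Fin.last t) {e : Finset V} (he : e ∈ EO E f (v a))
    {x : V} (hx : x ∈ e) : x ∈ Set.range v := by
  by_contra hxv
  obtain ⟨heE, hef, hve⟩ := he
  have hlonger : t + 1 ≤ pathLen E := by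
    rcases ha with rfl | rfl
    · exact (hP.cons hxv heE hef hx hve).le_pathLen
    · exact (hP.snoc hxv heE hef hx hve).le_pathLen
  omega

theorem IsBergePath.NH_subset_of_pathLen_eq [DecidableEq V] [Fintype V] {r : ℕ}
    (hE : IsRGraph r E) (hP : IsBergePath E t v f) (hlong : pathLen E = t)
    {a : Fin (t + 1)} (ha : a = 0 ∨ a = Fin.last t) :
    NH E (v a) ⊆ {T : Finset V | (↑T : Set V) ⊆ KsetP E v f (v a) ∧ T.card = r - 1}
      ∪ ((fun e => e.erase (v a)) '' EIset f (v a)) := by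
  rintro T ⟨hT, hTE⟩
  by_cases hPT : insert (v a) T ∈ Set.range f
  · exact .inr ⟨insert (v a) T, ⟨hPT, T.mem_insert_self _⟩, Finset.erase_insert hT⟩
  have hEO : insert (v a) T ∈ EO E f (v a) := ⟨hTE, hPT, T.mem_insert_self _⟩
  refine .inl ⟨fun x hx => ?_, ?_⟩
  · have hxT : x ∈ insert (v a) T := Finset.mem_insert_of_mem hx
    exact ⟨hP.mem_range_of_mem_EO hlong ha hEO hxT, ne_of_mem_of_not_mem hx hT, _, hEO, hxT⟩
  · have hcard := hE _ hTE
    rw [Finset.card_insert_of_notMem hT] at hcard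
    omega

end LongestPath

/-- **Corollary (Statement 8).** Let `P` be a longest Berge path in an `r`-graph `H`,
with edges `f 0, ..., f (t-1)` and key vertices `v 0, ..., v t` (so `t = ℓ(H)`).
Then for `a ∈ {0, t}`, `d_H(v a) ≤ C(|K_a(P)|, r-1) + |E^I_a(P)|`, with equality iff
`N_H(v a)` is the union of all `(r-1)`-subsets of `K_a(P)` and
`{e \ {v a} : e ∈ E^I_a(P)}`, and these two families are disjoint. -/
theorem degree_le_choose_add_EI {V : Type*} [DecidableEq V] [Fintype V]
    (r t : ℕ) (E : Finset (Finset V)) (hE : IsRGraph r E)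
    (v : Fin (t + 1) → V) (f : Fin t → Finset V)
    (hP : IsBergePath E t v f) (hlong : pathLen E = t)
    (a : Fin (t + 1)) (ha : a = 0 ∨ a = Fin.last t) :
    deg E (v a) ≤ ((KsetP E v f (v a)).ncard).choose (r - 1) + (EIset f (v a)).ncard ∧
      (deg E (v a)
          = ((KsetP E v f (v a)).ncard).choose (r - 1) + (EIset f (v a)).ncard ↔
        NH E (v a)
            = {T : Finset V | (↑T : Set V) ⊆ KsetP E v f (v a) ∧ T.card = r - 1}
              ∪ ((fun e => e.erase (v a)) '' EIset f (v a)) ∧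
          {T : Finset V | (↑T : Set V) ⊆ KsetP E v f (v a) ∧ T.card = r - 1}
              ∩ ((fun e => e.erase (v a)) '' EIset f (v a)) = ∅) := by
  have hsub := hP.NH_subset_of_pathLen_eq hE hlong ha
  have hsubsets := (Set.toFinite (KsetP E v f (v a))).ncard_setOf_subset_card_eq_choose (r - 1)
  have herase : ((fun e => e.erase (v a)) '' EIset f (v a)).ncard = (EIset f (v a)).ncard :=
    ((Finset.erase_injOn' (v a)).mono fun _ he => he.2).ncard_image
  rw [← ncard_NH, ← hsubsets, ← herase]
  exact ⟨Set.ncard_le_ncard_add_ncard_of_subset_union hsub,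
    Set.ncard_eq_ncard_add_ncard_iff_of_subset_union hsub⟩

end Berge
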